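/- Let 1 < p < q < ∞, α/n = 1/p − 1/q, r = (p+q)/2, β/n = 1/p − 1/r, and μ = ω dx rectangle doubling with doubling exponent γ and reverse-doubling exponent η on each coordinate. Let f ≥ 0 with ‖f‖_{L^p(μ)} finite and positive, θ_t(x) as above, and let τ(t,x) be defined implicitly by θ_t(x)^{1/p} ‖f‖_{L^p(μ)} / (M_β f)(x) = μ{ ∏_i |x_i − y_i| ≤ 2^{τ(t,x) − t_i} }^{1/r}. Then for every j ∈ ℤ and a.e. x, ∫_{Γ_t^j(x)} f(y) V(x,y)^{α/n − 1} dμ(y) ≤ 2^{−η|j − τ(t,x)| min{α−β, n/q}} · 2^{γn} · θ_t(x)^{(1/p)(1 − r/q)} (M_β f)(x)^{r/q} ‖f‖_{L^p(μ)}^{1 − r/q}. -/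

import Mathlib

/-!
Let `ρ s` be the `μ`-measure of the rectangle centred at `x` with half-sides `2 ^ (s - t i)`.
Integrating the one-dimensional doubling and reverse-doubling inequalities of `ω` over the
other coordinates gives `ρ s ≤ 2 ^ (-η n) ρ (s + 1) ≤ 2 ^ ((γ - η) n) ρ s`. A null rectangle
would make all larger ones null, and these exhaust `ℝⁿ` while `μ ≠ 0`; so `ρ` is positive, hence
`η ≤ γ` and `ρ s ≤ 2 ^ (-η n (s' - s - 1)) ρ s'` for `s ≤ s'`.

On `Γ_t^j(x)` we have `V(x, y) ≥ ρ j`, so the integral is at most `ρ j ^ (α/n - 1) ∫_{Γ_t^j} f`.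
For `j ≥ τ` bound `∫_{Γ_t^j} f` by Hölder against `θ_t(x)`, for `j ≤ τ` by `M_β f(x)` on the
rectangle of scale `j + 1`. The defining relation of `τ` turns `θ ^ (1/p) ‖f‖` into
`M_β f(x) ρ(τ) ^ (1/r)`, and the decay of `ρ` away from `τ` produces the factor
`2 ^ (-η |j - τ| min (α - β) (n/q))`; the exponents close up because `η/q ≤ γ/p` and, by the
arithmetic-harmonic mean inequality for `p, q`, `η (α - β) ≤ γ β`.
-/

open MeasureTheory ENNReal Set Function Filter

theorem ENNReal.rpow_le_rpow_of_nonpos {x y : ℝ≥0∞} {z : ℝ} (hz : z ≤ 0) (h : x ≤ y) :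
    y ^ z ≤ x ^ z := by
  rw [← neg_neg z, ENNReal.rpow_neg y, ENNReal.rpow_neg x]
  gcongr
  linarith

namespace StrongFractional

lemma rpow_mul_rpow_mul_rpow_eq_one {x : ℝ≥0∞} (h0 : x ≠ 0) (htop : x ≠ ⊤) {a b c : ℝ}
    (h : a + b + c = 0) : x ^ a * x ^ b * x ^ c = 1 := by
  rw [← ENNReal.rpow_add _ _ h0 htop, ← ENNReal.rpow_add _ _ h0 htop, h, ENNReal.rpow_zero]

lemma two_rpow_mul_rpow {g : ℝ} {x : ℝ≥0∞} {e : ℝ} (he : 0 ≤ e) :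
    ((2 : ℝ≥0∞) ^ g * x) ^ e = 2 ^ (g * e) * x ^ e := by
  rw [ENNReal.mul_rpow_of_nonneg _ _ he, ← ENNReal.rpow_mul]

lemma rpow_mul_rpow_mul_rpow_eq_mul_rpow {θ N M P : ℝ≥0∞} {u w f : ℝ} (hM0 : M ≠ 0) (hM : M ≠ ⊤)
    (hf : f ≤ 1) (h : θ ^ u * N / M = P ^ w) :
    θ ^ (u * (1 - f)) * M ^ f * N ^ (1 - f) = M * P ^ (w * (1 - f)) := by
  have hf' : 0 ≤ 1 - f := by linarith
  have hsplit : M = M ^ f * M ^ (1 - f) := by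
    rw [← ENNReal.rpow_add _ _ hM0 hM, add_sub_cancel, ENNReal.rpow_one]
  rw [ENNReal.rpow_mul P, ← h, ENNReal.div_rpow_of_nonneg _ _ hf',
    ENNReal.mul_rpow_of_nonneg _ _ hf', ← ENNReal.rpow_mul]
  nth_rw 2 [hsplit]
  rw [mul_assoc (M ^ f), ENNReal.mul_div_cancel
    (ENNReal.rpow_pos (pos_iff_ne_zero.2 hM0) hM).ne' (ENNReal.rpow_ne_top_of_nonneg hf' hM)]
  ring

lemma rpow_one_div_eq_mul {F N θ : ℝ≥0∞} {p : ℝ} (hp : 0 < p) (hN0 : N ≠ 0) (hN : N ≠ ⊤)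
    (hθ : θ = F / N ^ p) : F ^ (1 / p) = θ ^ (1 / p) * N := by
  rw [hθ, ENNReal.div_rpow_of_nonneg _ _ (by positivity), ← ENNReal.rpow_mul,
    mul_one_div_cancel hp.ne', ENNReal.rpow_one, ENNReal.div_mul_cancel hN0 hN]

section Slicing

variable {m : ℕ}

lemma exists_ae_insertNth (i : Fin (m + 1)) {P : (Fin (m + 1) → ℝ) → Prop}
    (h : ∀ᵐ x ∂(volume : Measure (Fin (m + 1) → ℝ)), P x) :
    ∃ a : ℝ, ∀ᵐ y ∂(volume : Measure (Fin m → ℝ)), P (i.insertNth a y) := by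
  have he := (volume_preserving_piFinSuccAbove (fun _ : Fin (m + 1) => ℝ) i).symm
  rw [Measure.volume_eq_prod] at he
  exact (Measure.ae_ae_of_ae_prod (he.quasiMeasurePreserving.ae h)).exists

lemma withDensity_pi_update (ω : (Fin (m + 1) → ℝ) → ℝ≥0∞) (hω : Measurable ω)
    (i : Fin (m + 1)) (I : Fin (m + 1) → Set ℝ) (hI : ∀ j, MeasurableSet (I j)) (S : Set ℝ)
    (hS : MeasurableSet S) :
    volume.withDensity ω (pi univ (update I i S)) =
      ∫⁻ y in pi univ (fun j => I (i.succAbove j)), ∫⁻ u in S, ω (i.insertNth u y) := by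
  have he := (volume_preserving_piFinSuccAbove (fun _ : Fin (m + 1) => ℝ) i).symm
  rw [Measure.volume_eq_prod] at he
  have hpre : (MeasurableEquiv.piFinSuccAbove (fun _ => ℝ) i).symm ⁻¹'
      pi univ (update I i S) = S ×ˢ pi univ (fun j => I (i.succAbove j)) := by
    ext ⟨u, y⟩
    simp [i.forall_iff_succAbove]
  have hmeas : MeasurableSet (pi univ (update I i S)) :=
    MeasurableSet.univ_pi fun j => by
      rcases eq_or_ne j i with rfl | hj
      · simpa using hS
      · simpa [hj] using hI j
  rw [withDensity_apply _ hmeas, ← he.setLIntegral_comp_preimage hmeas hω, hpre]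
  exact setLIntegral_prod_symm _ (hω.comp (MeasurableEquiv.measurable _)).aemeasurable

lemma withDensity_pi_update_le {n : ℕ} {ω : (Fin n → ℝ) → ℝ≥0∞} (hω : Measurable ω)
    (i : Fin n) (I : Fin n → Set ℝ) (hI : ∀ j, MeasurableSet (I j)) {S T : Set ℝ}
    (hS : MeasurableSet S) (hT : MeasurableSet T) {K : ℝ≥0∞} (hK : K ≠ ⊤)
    (h : ∀ᵐ x ∂(volume : Measure (Fin n → ℝ)),
      ∫⁻ u in S, ω (update x i u) ≤ K * ∫⁻ u in T, ω (update x i u)) :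
    volume.withDensity ω (pi univ (update I i S)) ≤
      K * volume.withDensity ω (pi univ (update I i T)) := by
  obtain ⟨m, rfl⟩ : ∃ m, n = m + 1 := ⟨n - 1, by have := i.pos; omega⟩
  obtain ⟨a, ha⟩ := exists_ae_insertNth i h
  rw [withDensity_pi_update ω hω i I hI S hS, withDensity_pi_update ω hω i I hI T hT,
    ← lintegral_const_mul' _ _ hK]
  refine lintegral_mono_ae (ae_restrict_of_ae ?_)
  filter_upwards [ha] with y hy
  simpa only [Fin.update_insertNth] using hy

end Slicing

lemma pow_card_mul_le_of_update_le {ι : Type*} [Fintype ι] [DecidableEq ι]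
    (F : (ι → ℝ) → ℝ≥0∞) {δ δ' : ι → ℝ} {K : ℝ≥0∞}
    (h : ∀ ε i, F (update ε i (δ' i)) ≤ K * F (update ε i (δ i))) :
    F δ' ≤ K ^ Fintype.card ι * F δ := by
  suffices ∀ s : Finset ι, F (s.piecewise δ' δ) ≤ K ^ s.card * F δ by
    simpa using this Finset.univ
  intro s
  induction s using Finset.induction_on with
  | empty => simp
  | insert i s hi ih =>
    calc F ((insert i s).piecewise δ' δ)
        ≤ K * F (update (s.piecewise δ' δ) i (δ i)) := by
          rw [Finset.piecewise_insert]; exact h _ i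
      _ ≤ K * (K ^ s.card * F δ) := by
          rw [← Finset.piecewise_eq_of_notMem s δ' δ hi, update_eq_self]; gcongr
      _ = K ^ (insert i s).card * F δ := by
          rw [Finset.card_insert_of_notMem hi, pow_succ']; ring

section Boxes

variable {n : ℕ}

def box (c δ : Fin n → ℝ) : Set (Fin n → ℝ) := {y | ∀ i, |c i - y i| ≤ δ i}

lemma box_eq_pi (c δ : Fin n → ℝ) :
    box c δ = pi univ fun i => Icc (c i - δ i) (c i + δ i) := by
  ext y
  simp only [box, mem_ofPred_eq, mem_univ_pi, mem_Icc, abs_le]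
  exact forall_congr' fun i => by constructor <;> rintro ⟨h₁, h₂⟩ <;> constructor <;> linarith

lemma box_mono (c : Fin n → ℝ) {δ δ' : Fin n → ℝ} (h : δ ≤ δ') : box c δ ⊆ box c δ' :=
  fun _ hy i => (hy i).trans (h i)

lemma iUnion_box_eq_univ (c : Fin n → ℝ) {δ : ℕ → Fin n → ℝ}
    (hδ : ∀ i, Tendsto (fun k => δ k i) atTop atTop) : ⋃ k, box c (δ k) = univ := by
  refine eq_univ_of_forall fun y => mem_iUnion.2 ?_
  exact (eventually_all.2 fun i => (hδ i).eventually_ge_atTop |c i - y i|).exists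

variable {ω : (Fin n → ℝ) → ℝ≥0∞}

lemma withDensity_box_le_pow_mul (hω : Measurable ω) {K : ℝ≥0∞} (hK : K ≠ ⊤)
    (c : Fin n → ℝ) {δ δ' : Fin n → ℝ}
    (h : ∀ i, ∀ᵐ x ∂(volume : Measure (Fin n → ℝ)),
      ∫⁻ u in Icc (c i - δ' i) (c i + δ' i), ω (update x i u) ≤
        K * ∫⁻ u in Icc (c i - δ i) (c i + δ i), ω (update x i u)) :
    volume.withDensity ω (box c δ') ≤ K ^ n * volume.withDensity ω (box c δ) := by
  classical
  refine (pow_card_mul_le_of_update_le (fun ε => volume.withDensity ω (box c ε))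
    fun ε i => ?_).trans_eq (by rw [Fintype.card_fin])
  simp only [box_eq_pi, apply_update (fun j r => Icc (c j - r) (c j + r))]
  exact withDensity_pi_update_le hω i _ (fun _ => measurableSet_Icc) measurableSet_Icc
    measurableSet_Icc hK (h i)

end Boxes

structure IsDoublingScale (ρ : ℝ → ℝ≥0∞) (g h : ℝ) : Prop where
  mono : Monotone ρ
  pos : ∀ s, 0 < ρ s
  le_double : ∀ s, ρ (s + 1) ≤ 2 ^ g * ρ s
  le_half : ∀ s, ρ s ≤ 2 ^ (-h) * ρ (s + 1)

namespace IsDoublingScale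

variable {ρ : ℝ → ℝ≥0∞} {g h : ℝ}

lemma le_two_rpow_mul_add_nat (hρ : IsDoublingScale ρ g h) (s : ℝ) (k : ℕ) :
    ρ s ≤ 2 ^ (-(h * k)) * ρ (s + k) := by
  induction k with
  | zero => simp
  | succ k ih =>
    calc ρ s ≤ 2 ^ (-(h * k)) * (2 ^ (-h) * ρ (s + k + 1)) :=
          ih.trans (by gcongr; exact hρ.le_half _)
      _ = 2 ^ (-(h * ↑(k + 1))) * ρ (s + ↑(k + 1)) := by
        rw [← mul_assoc, ← ENNReal.rpow_add _ _ two_ne_zero ofNat_ne_top]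
        push_cast; ring_nf

lemma le_two_rpow_mul (hρ : IsDoublingScale ρ g h) (hh : 0 ≤ h) {s s' : ℝ} (hss : s ≤ s') :
    ρ s ≤ 2 ^ (-(h * (s' - s - 1))) * ρ s' := by
  set k := ⌊s' - s⌋₊
  have hk : s' - s - 1 ≤ k := (Nat.sub_one_lt_floor _).le
  calc ρ s ≤ 2 ^ (-(h * k)) * ρ (s + k) := hρ.le_two_rpow_mul_add_nat s k
    _ ≤ 2 ^ (-(h * (s' - s - 1))) * ρ s' := by
      gcongr
      · exact one_le_two
      · exact hρ.mono (by linarith [Nat.floor_le (sub_nonneg.2 hss)])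

lemma le_of_ne_top (hρ : IsDoublingScale ρ g h) {s : ℝ} (hs : ρ s ≠ ⊤) : h ≤ g := by
  by_contra! hgh
  have hlt : (2 : ℝ≥0∞) ^ (-h + g) < 1 := by
    simpa using ENNReal.rpow_lt_rpow_of_exponent_lt one_lt_two ofNat_ne_top
      (show -h + g < 0 by linarith)
  have := calc ρ s ≤ 2 ^ (-h) * (2 ^ g * ρ s) :=
        (hρ.le_half s).trans (by gcongr; exact hρ.le_double s)
    _ = 2 ^ (-h + g) * ρ s := by
        rw [← mul_assoc, ← ENNReal.rpow_add _ _ two_ne_zero ofNat_ne_top]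
    _ < 1 * ρ s := ENNReal.mul_lt_mul_left (hρ.pos s).ne' hs hlt
  simp at this

end IsDoublingScale

section DyadicBoxes

variable {n : ℕ}

def dyadicBox (x t : Fin n → ℝ) (s : ℝ) : Set (Fin n → ℝ) :=
  box x fun i => (2 : ℝ) ^ (s - t i)

lemma two_rpow_add_one_sub (s t : ℝ) : (2 : ℝ) ^ (s + 1 - t) = 2 * 2 ^ (s - t) := by
  rw [add_sub_right_comm, Real.rpow_add_one two_ne_zero, mul_comm]

lemma iUnion_dyadicBox_add_nat (x t : Fin n → ℝ) (s : ℝ) :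
    ⋃ k : ℕ, dyadicBox x t (s + k) = univ :=
  iUnion_box_eq_univ x fun _ => (tendsto_rpow_atTop_of_base_gt_one 2 one_lt_two).comp <|
    tendsto_atTop_add_const_right _ _ <|
      tendsto_atTop_add_const_left _ _ tendsto_natCast_atTop_atTop

lemma isDoublingScale_withDensity_dyadicBox {ω : (Fin n → ℝ) → ℝ≥0∞} (hω : Measurable ω)
    (hμ : volume.withDensity ω ≠ 0) {γ η : ℝ}
    (hdoub : ∀ i : Fin n, ∀ᵐ x ∂(volume : Measure (Fin n → ℝ)), ∀ c r : ℝ, 0 < r →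
      ∫⁻ u in Icc (c - 2 * r) (c + 2 * r), ω (update x i u) ≤
        2 ^ γ * ∫⁻ u in Icc (c - r) (c + r), ω (update x i u))
    (hrev : ∀ i : Fin n, ∀ᵐ x ∂(volume : Measure (Fin n → ℝ)), ∀ c r : ℝ, 0 < r →
      ∫⁻ u in Icc (c - r) (c + r), ω (update x i u) ≤
        2 ^ (-η) * ∫⁻ u in Icc (c - 2 * r) (c + 2 * r), ω (update x i u))
    (x t : Fin n → ℝ) :
    IsDoublingScale (fun s => volume.withDensity ω (dyadicBox x t s)) (γ * n) (η * n) := by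
  set μ := volume.withDensity ω
  have hK {a : ℝ} : (2 : ℝ≥0∞) ^ a ≠ ⊤ := ENNReal.rpow_ne_top_of_nonneg' two_pos ofNat_ne_top
  have hpow (a : ℝ) : ((2 : ℝ≥0∞) ^ a) ^ n = 2 ^ (a * n) := by
    rw [← ENNReal.rpow_natCast, ← ENNReal.rpow_mul]
  have hle_double (s : ℝ) :
      μ (dyadicBox x t (s + 1)) ≤ 2 ^ (γ * n) * μ (dyadicBox x t s) := by
    rw [← hpow]
    refine withDensity_box_le_pow_mul hω hK x fun i => ?_
    filter_upwards [hdoub i] with y hy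
    simpa only [two_rpow_add_one_sub] using hy (x i) _ (by positivity)
  have hle_half (s : ℝ) :
      μ (dyadicBox x t s) ≤ 2 ^ (-(η * n)) * μ (dyadicBox x t (s + 1)) := by
    rw [← neg_mul, ← hpow]
    refine withDensity_box_le_pow_mul hω hK x fun i => ?_
    filter_upwards [hrev i] with y hy
    simpa only [two_rpow_add_one_sub] using hy (x i) _ (by positivity)
  refine ⟨fun s s' hss => measure_mono (box_mono x fun _ =>
    Real.rpow_le_rpow_of_exponent_le one_le_two (by linarith)), fun s => ?_, hle_double, hle_half⟩
  refine pos_iff_ne_zero.2 fun hs => hμ (Measure.measure_univ_eq_zero.1 ?_)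
  have hk (k : ℕ) : μ (dyadicBox x t (s + k)) = 0 := by
    induction k with
    | zero => simpa using hs
    | succ k ih =>
      refine le_antisymm ?_ zero_le
      simpa [ih, add_assoc] using hle_double (s + k)
  rw [← iUnion_dyadicBox_add_nat x t s]
  exact measure_iUnion_null hk

lemma two_rpow_intCast_sub (a b : ℤ) : (2 : ℝ) ^ ((a : ℝ) - b) = 2 ^ (a - b) := by
  rw [← Int.cast_sub, Real.rpow_intCast]

lemma dyadicBox_subset_of_two_zpow_le {x y : Fin n → ℝ} {t : Fin n → ℤ} {j : ℤ}
    (hy : ∀ i, (2 : ℝ) ^ (j - t i) ≤ |x i - y i|) :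
    dyadicBox x (fun i => t i) j ⊆ {z | ∀ i, |x i - z i| ≤ |x i - y i|} := fun _ hz i =>
  (hz i).trans ((two_rpow_intCast_sub _ _).trans_le (hy i))

lemma setOf_abs_lt_two_zpow_subset_dyadicBox (x : Fin n → ℝ) (t : Fin n → ℤ) (j : ℤ) :
    {y | ∀ i, |x i - y i| < (2 : ℝ) ^ (j + 1 - t i)} ⊆ dyadicBox x (fun i => t i) (j + 1) :=
  fun y hy i => by
    rw [← Int.cast_one, ← Int.cast_add]
    exact (hy i).le.trans_eq (two_rpow_intCast_sub _ _).symm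

end DyadicBoxes

section Integrals

variable {X : Type*} [MeasurableSpace X] {μ : Measure X} {f : X → ℝ≥0∞}

lemma setLIntegral_le_rpow_mul_measure_rpow (hf : AEMeasurable f μ) {p : ℝ} (hp : 1 < p)
    (A : Set X) :
    ∫⁻ y in A, f y ∂μ ≤ (∫⁻ y in A, f y ^ p ∂μ) ^ (1 / p) * μ A ^ (1 - 1 / p) := by
  have hconj : p.HolderConjugate (p / (p - 1)) := .conjExponent hp
  have h := ENNReal.lintegral_mul_le_Lp_mul_Lq (μ.restrict A) hconj hf.restrict
    (aemeasurable_const (b := (1 : ℝ≥0∞)))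
  simp only [Pi.mul_apply, mul_one, ENNReal.one_rpow, lintegral_one,
    Measure.restrict_apply_univ] at h
  convert h using 3
  have := hconj.inv_add_inv_eq_one
  rw [one_div, one_div]
  linarith

lemma setLIntegral_le_density_rpow_mul (hf : AEMeasurable f μ) {p : ℝ} (hp : 1 < p)
    {N θ : ℝ≥0∞} (hN0 : N ≠ 0) (hN : N ≠ ⊤) {A Γ : Set X}
    (hθ : θ = (∫⁻ y in Γ, f y ^ p ∂μ) / N ^ p) (hA : A ⊆ Γ) :
    ∫⁻ y in A, f y ∂μ ≤ θ ^ (1 / p) * N * μ A ^ (1 - 1 / p) := by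
  refine (setLIntegral_le_rpow_mul_measure_rpow hf hp A).trans ?_
  rw [← rpow_one_div_eq_mul (by linarith) hN0 hN hθ]
  gcongr

lemma setLIntegral_rpow_div_ne_top {p : ℝ} (hp : 0 < p) {N : ℝ≥0∞}
    (hN : N = (∫⁻ y, f y ^ p ∂μ) ^ (1 / p)) (hN0 : N ≠ 0) (hNtop : N ≠ ⊤) (A : Set X) :
    (∫⁻ y in A, f y ^ p ∂μ) / N ^ p ≠ ⊤ := by
  have hfp : ∫⁻ y, f y ^ p ∂μ ≠ ⊤ := by
    rwa [hN, Ne, ENNReal.rpow_eq_top_iff_of_pos (one_div_pos.2 hp)] at hNtop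
  exact ENNReal.div_ne_top (ne_top_of_le_ne_top hfp (setLIntegral_le_lintegral _ _))
    (ENNReal.rpow_pos (pos_iff_ne_zero.2 hN0) hNtop).ne'

lemma setLIntegral_le_mul_rpow_of_rpow_neg_mul_le {A : Set X} (hA : μ A ≠ ⊤) {e : ℝ}
    {M : ℝ≥0∞} (h : μ A ^ (-e) * ∫⁻ y in A, f y ∂μ ≤ M) :
    ∫⁻ y in A, f y ∂μ ≤ M * μ A ^ e := by
  rcases eq_or_ne (μ A) 0 with h0 | h0
  · simp [Measure.restrict_eq_zero.2 h0]
  calc ∫⁻ y in A, f y ∂μ = (μ A ^ (-e) * ∫⁻ y in A, f y ∂μ) * μ A ^ e := by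
        rw [mul_comm (μ A ^ (-e)), mul_assoc, ← ENNReal.rpow_add _ _ h0 hA, neg_add_cancel,
          ENNReal.rpow_zero, mul_one]
    _ ≤ M * μ A ^ e := by gcongr

lemma setLIntegral_mul_rpow_le (hf : Measurable f) {V : X → ℝ≥0∞} {A : Set X} {c : ℝ≥0∞}
    {e : ℝ} (he : e ≤ 0) (hV : ∀ y ∈ A, c ≤ V y) :
    ∫⁻ y in A, f y * V y ^ e ∂μ ≤ c ^ e * ∫⁻ y in A, f y ∂μ := by
  rw [← lintegral_const_mul _ hf]
  refine setLIntegral_mono (measurable_const.mul hf) fun y hy => ?_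
  rw [mul_comm]
  exact mul_le_mul_left (ENNReal.rpow_le_rpow_of_nonpos he (hV y hy)) _

end Integrals

lemma le_above_balance {L I M x P : ℝ≥0∞} {g c a u v w : ℝ} (hx0 : x ≠ 0) (hx : x ≠ ⊤)
    (hu : u ≤ 1) (hv : 0 ≤ v) (hvw : v ≤ w) (ha : a = u - v)
    (hL : L ≤ x ^ (a - 1) * I) (hI : I ≤ M * P ^ w * (2 ^ g * x) ^ (1 - u))
    (hP : P ≤ 2 ^ (-c) * x) :
    L ≤ 2 ^ (-c * v + g * (1 - u)) * (M * P ^ (w - v)) := by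
  have hu' : 0 ≤ 1 - u := by linarith
  calc L ≤ x ^ (a - 1) * (M * (P ^ (w - v) * P ^ v) * (2 ^ g * x) ^ (1 - u)) := by
        rw [← ENNReal.rpow_add_of_nonneg _ _ (by linarith) hv, sub_add_cancel]
        exact hL.trans (by gcongr)
    _ ≤ x ^ (a - 1) * (M * (P ^ (w - v) * (2 ^ (-c) * x) ^ v) * (2 ^ g * x) ^ (1 - u)) := by
        gcongr
    _ = 2 ^ (-c * v + g * (1 - u)) * (M * P ^ (w - v)) *
          (x ^ (a - 1) * x ^ v * x ^ (1 - u)) := by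
        rw [two_rpow_mul_rpow hv, two_rpow_mul_rpow hu',
          ENNReal.rpow_add _ _ two_ne_zero ofNat_ne_top]
        ring
    _ = 2 ^ (-c * v + g * (1 - u)) * (M * P ^ (w - v)) := by
        rw [rpow_mul_rpow_mul_rpow_eq_one hx0 hx (by rw [ha]; ring), mul_one]

lemma le_below_balance {L I M x P : ℝ≥0∞} {g c a b e : ℝ} (hx0 : x ≠ 0) (hx : x ≠ ⊤)
    (hb : b ≤ 1) (he : 0 ≤ e) (hab : a - b = e)
    (hL : L ≤ x ^ (a - 1) * I) (hI : I ≤ M * (2 ^ g * x) ^ (1 - b))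
    (hxP : x ≤ 2 ^ (-c) * P) :
    L ≤ 2 ^ (g * (1 - b) + -c * e) * (M * P ^ e) := by
  have hb' : 0 ≤ 1 - b := by linarith
  calc L ≤ x ^ (a - 1) * (M * (2 ^ g * x) ^ (1 - b)) := hL.trans (by gcongr)
    _ = 2 ^ (g * (1 - b)) * M * (x ^ (a - 1) * x ^ (1 - b)) := by
        rw [two_rpow_mul_rpow hb']; ring
    _ = 2 ^ (g * (1 - b)) * M * x ^ e := by
        rw [← ENNReal.rpow_add _ _ hx0 hx, ← hab]; ring_nf
    _ ≤ 2 ^ (g * (1 - b)) * M * (2 ^ (-c) * P) ^ e := by gcongr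
    _ = 2 ^ (g * (1 - b) + -c * e) * (M * P ^ e) := by
        rw [two_rpow_mul_rpow he, ENNReal.rpow_add _ _ two_ne_zero ofNat_ne_top]; ring

lemma inv_arith_mean_bounds {p q r : ℝ} (hp : 1 < p) (hpq : p < q) (hr : r = (p + q) / 2) :
    0 < 1 / q ∧ 1 / q < 1 / r ∧ 1 / r < 1 / p ∧ 1 / p < 1 ∧ 1 / r - 1 / q ≤ 1 / p - 1 / r := by
  subst hr
  have hp0 : 0 < p := by linarith
  have hq0 : 0 < q := by linarith
  refine ⟨by positivity, ?_, ?_, ?_, ?_⟩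
  · exact one_div_lt_one_div_of_lt (by linarith) (by linarith)
  · exact one_div_lt_one_div_of_lt hp0 (by linarith)
  · exact (div_lt_one hp0).2 hp
  · rw [div_sub_div _ _ (by linarith) hq0.ne', div_sub_div _ _ hp0.ne' (by linarith),
      div_le_div_iff₀ (by positivity) (by positivity)]
    nlinarith [sq_nonneg (p - q), mul_pos hp0 hq0]

lemma cone_estimate_of_ne_top {n : ℕ} (hn : 0 < n) {ρ : ℝ → ℝ≥0∞} {γ η : ℝ} (hη : 0 < η)
    (hηγ : η ≤ γ) (hρ : IsDoublingScale ρ (γ * n) (η * n)) {p q r α β : ℝ} (hp : 1 < p)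
    (hpq : p < q) (hα : α / n = 1 / p - 1 / q) (hr : r = (p + q) / 2)
    (hβ : β / n = 1 / p - 1 / r) {L I M : ℝ≥0∞} {j τ : ℝ} (hj : ρ j ≠ ⊤)
    (hL : L ≤ ρ j ^ (α / n - 1) * I)
    (hHolder : I ≤ M * ρ τ ^ (1 / r) * (2 ^ (γ * n) * ρ j) ^ (1 - 1 / p))
    (hMax : I ≤ M * (2 ^ (γ * n) * ρ j) ^ (1 - β / n)) :
    L ≤ 2 ^ (-(η * |j - τ| * min (α - β) (n / q)) + γ * n) * (M * ρ τ ^ ((α - β) / n)) := by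
  obtain ⟨hv, hvw, hwu, hu, hw2⟩ := inv_arith_mean_bounds hp hpq hr
  have hn' : (0 : ℝ) < n := by exact_mod_cast hn
  have hαβ : (α - β) / n = 1 / r - 1 / q := by rw [sub_div, hα, hβ]; ring
  have hm : min (α - β) (n / q) ≤ n * (1 / r - 1 / q) ∧
      min (α - β) (n / q) ≤ n * (1 / q) := by
    rw [← hαβ, mul_div_cancel₀ _ hn'.ne', mul_one_div]
    exact ⟨min_le_left _ _, min_le_right _ _⟩
  rw [hαβ]
  -- Above the balance point Hölder's bound wins, below it the maximal bound.
  rcases le_total τ j with hτj | hjτ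
  · refine (le_above_balance (hρ.pos j).ne' hj hu.le hv.le hvw.le hα hL hHolder
      (hρ.le_two_rpow_mul (by positivity) hτj)).trans ?_
    refine mul_le_mul_left (ENNReal.rpow_le_rpow_of_exponent_le one_le_two ?_) _
    rw [abs_of_nonneg (sub_nonneg.2 hτj)]
    nlinarith [mul_le_mul_of_nonneg_left hm.2 (mul_nonneg hη.le (sub_nonneg.2 hτj)),
      mul_le_mul_of_nonneg_left hηγ (mul_nonneg hn'.le hv.le),
      mul_le_mul_of_nonneg_left hwu.le (mul_nonneg hn'.le (hη.le.trans hηγ))]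
  · refine (le_below_balance (e := 1 / r - 1 / q) (hρ.pos j).ne' hj (by rw [hβ]; linarith)
      (by linarith) (by rw [← hαβ, sub_div]) hL hMax
      (hρ.le_two_rpow_mul (by positivity) hjτ)).trans ?_
    refine mul_le_mul_left (ENNReal.rpow_le_rpow_of_exponent_le one_le_two ?_) _
    rw [abs_of_nonpos (sub_nonpos.2 hjτ), hβ]
    nlinarith [mul_le_mul_of_nonneg_left hm.1 (mul_nonneg hη.le (sub_nonneg.2 hjτ)),
      mul_le_mul_of_nonneg_left hηγ (mul_nonneg hn'.le (sub_nonneg.2 hvw.le)),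
      mul_le_mul_of_nonneg_left hw2 (mul_nonneg hn'.le (hη.le.trans hηγ))]

lemma cone_estimate {n : ℕ} (hn : 0 < n) {ρ : ℝ → ℝ≥0∞} {γ η : ℝ} (hη : 0 < η)
    (hρ : IsDoublingScale ρ (γ * n) (η * n)) {p q r α β : ℝ} (hp : 1 < p) (hpq : p < q)
    (hα : α / n = 1 / p - 1 / q) (hr : r = (p + q) / 2) (hβ : β / n = 1 / p - 1 / r)
    {L I θ N M : ℝ≥0∞} (hθ : θ ≠ ⊤) (hN : N ≠ ⊤) {j τ : ℝ}
    (hL : L ≤ ρ j ^ (α / n - 1) * I)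
    (hHolder : I ≤ θ ^ (1 / p) * N * (2 ^ (γ * n) * ρ j) ^ (1 - 1 / p))
    (hMax : ρ j ≠ ⊤ → I ≤ M * (2 ^ (γ * n) * ρ j) ^ (1 - β / n))
    (hτ : θ ^ (1 / p) * N / M = ρ τ ^ (1 / r)) :
    L ≤ (2 : ℝ≥0∞) ^ (-(η * |j - τ| * min (α - β) (n / q))) * 2 ^ (γ * n) *
      θ ^ ((1 / p) * (1 - r / q)) * M ^ (r / q) * N ^ (1 - r / q) := by
  obtain ⟨hv, hvw, hwu, hu, -⟩ := inv_arith_mean_bounds hp hpq hr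
  rcases eq_or_ne (ρ j) ⊤ with hj | hj
  · refine hL.trans (le_of_eq_of_le ?_ zero_le)
    rw [hj, ENNReal.top_rpow_of_neg (by rw [hα]; linarith), zero_mul]
  rcases eq_or_ne M 0 with hM0 | hM0
  · have hI : I = 0 := le_antisymm ((hMax hj).trans_eq (by rw [hM0, zero_mul])) zero_le
    rw [hI, mul_zero] at hL
    exact hL.trans zero_le
  have hMtop : M ≠ ⊤ := by
    rintro rfl
    rw [ENNReal.div_top, eq_comm, ENNReal.rpow_eq_zero_iff] at hτ
    rcases hτ with ⟨h0, -⟩ | ⟨-, hneg⟩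
    · exact (hρ.pos τ).ne' h0
    · linarith
  have hτtop : ρ τ ≠ ⊤ := by
    intro htop
    rw [htop, ENNReal.top_rpow_of_pos (by linarith)] at hτ
    exact (ENNReal.div_lt_top (mul_ne_top (ENNReal.rpow_ne_top_of_nonneg (by linarith) hθ) hN)
      hM0).ne hτ
  have hRHS : θ ^ ((1 / p) * (1 - r / q)) * M ^ (r / q) * N ^ (1 - r / q) =
      M * ρ τ ^ ((α - β) / n) := by
    have hq0 : 0 < q := by linarith
    have hr0 : 0 < r := by linarith
    rw [rpow_mul_rpow_mul_rpow_eq_mul_rpow hM0 hMtop ((div_le_one hq0).2 (by linarith)) hτ,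
      sub_div, hα, hβ]
    congr 2
    field_simp
    ring
  rw [mul_assoc _ (θ ^ _), mul_assoc _ (θ ^ _ * _), hRHS,
    ← ENNReal.rpow_add _ _ two_ne_zero ofNat_ne_top]
  refine cone_estimate_of_ne_top hn hη ?_ hρ hp hpq hα hr hβ hj hL ?_ (hMax hj)
  · exact le_of_mul_le_mul_right (hρ.le_of_ne_top hτtop) (by exact_mod_cast hn)
  · rwa [← hτ, ENNReal.mul_div_cancel hM0 hMtop]

end StrongFractional

open StrongFractional

theorem stmt13_general (n : ℕ) (hn : 0 < n)
    (ω : (Fin n → ℝ) → ℝ≥0∞) (hω : Measurable ω)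
    (μ : Measure (Fin n → ℝ)) (hμ : μ = volume.withDensity ω)
    (γ η : ℝ) (hη : 0 < η)
    (hdoub : ∀ i : Fin n, ∀ᵐ x ∂(volume : Measure (Fin n → ℝ)),
      ∀ c r : ℝ, 0 < r →
        ∫⁻ u in Set.Icc (c - 2*r) (c + 2*r), ω (Function.update x i u) ≤
          (2 : ℝ≥0∞) ^ γ * ∫⁻ u in Set.Icc (c - r) (c + r), ω (Function.update x i u))
    (hrev : ∀ i : Fin n, ∀ᵐ x ∂(volume : Measure (Fin n → ℝ)),
      ∀ c r : ℝ, 0 < r →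
        ∫⁻ u in Set.Icc (c - r) (c + r), ω (Function.update x i u) ≤
          (2 : ℝ≥0∞) ^ (-η) * ∫⁻ u in Set.Icc (c - 2*r) (c + 2*r), ω (Function.update x i u))
    (p q r α β : ℝ) (hp : 1 < p) (hpq : p < q)
    (hα : α / n = 1 / p - 1 / q) (hr : r = (p + q) / 2) (hβ : β / n = 1 / p - 1 / r)
    (f : (Fin n → ℝ) → ℝ≥0∞) (hf : Measurable f)
    (N : ℝ≥0∞) (hN : N = (∫⁻ y, f y ^ p ∂μ) ^ (1 / p)) (hN0 : 0 < N) (hNtop : N ≠ ⊤)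
    (Γj : (Fin n → ℤ) → ℤ → (Fin n → ℝ) → Set (Fin n → ℝ))
    (hΓj : ∀ t j x, Γj t j x = {y | ∀ i,
      (2:ℝ) ^ (j - t i) ≤ |x i - y i| ∧ |x i - y i| < 2 ^ (j + 1 - t i)})
    (Γ : (Fin n → ℤ) → (Fin n → ℝ) → Set (Fin n → ℝ))
    (hΓ : ∀ t x, Γ t x = ⋃ j : ℤ, Γj t j x)
    (V : (Fin n → ℝ) → (Fin n → ℝ) → ℝ≥0∞)
    (hV : ∀ x y, V x y = μ {z | ∀ i, |x i - z i| ≤ |x i - y i|})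
    (θ : (Fin n → ℤ) → (Fin n → ℝ) → ℝ≥0∞)
    (hθ : ∀ t x, θ t x = (∫⁻ y in Γ t x, f y ^ p ∂μ) / N ^ p)
    (M : (Fin n → ℝ) → ℝ≥0∞)
    (hM : ∀ x, M x = ⨆ (δ : Fin n → ℝ) (_ : ∀ i, 0 < δ i),
      μ {y | ∀ i, |x i - y i| < δ i} ^ (β / n - 1) *
        ∫⁻ y in {y | ∀ i, |x i - y i| < δ i}, f y ∂μ)
    (τ : (Fin n → ℤ) → (Fin n → ℝ) → ℝ)
    (hτ : ∀ t x, θ t x ^ (1 / p) * N / M x =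
      μ {y | ∀ i, |x i - y i| ≤ (2:ℝ) ^ (τ t x - (t i : ℝ))} ^ (1 / r)) :
    ∀ t : Fin n → ℤ, ∀ j : ℤ, ∀ᵐ x ∂μ,
      ∫⁻ y in Γj t j x, f y * V x y ^ (α / n - 1) ∂μ ≤
        (2 : ℝ≥0∞) ^ (-(η * |(j : ℝ) - τ t x| * min (α - β) (n / q))) *
          (2 : ℝ≥0∞) ^ (γ * n) *
          θ t x ^ ((1 / p) * (1 - r / q)) * M x ^ (r / q) * N ^ (1 - r / q) := by
  intro t j
  refine ae_of_all _ fun x => ?_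
  obtain ⟨hv, hvw, -, hu, -⟩ := inv_arith_mean_bounds hp hpq hr
  have hμ0 : μ ≠ 0 := by
    rintro rfl
    simp [hN, ENNReal.zero_rpow_of_pos (inv_pos.2 (by linarith : (0 : ℝ) < p))] at hN0
  subst hμ
  set μ := volume.withDensity ω
  have hρ := isDoublingScale_withDensity_dyadicBox hω hμ0 hdoub hrev x (fun i => t i)
  set ρ := fun s => μ (dyadicBox x (fun i => t i) s)
  set B := {y : Fin n → ℝ | ∀ i, |x i - y i| < (2 : ℝ) ^ (j + 1 - t i)}
  have hΓB : Γj t j x ⊆ B := hΓj t j x ▸ fun y hy i => (hy i).2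
  have hB : μ B ≤ 2 ^ (γ * n) * ρ j :=
    (measure_mono (setOf_abs_lt_two_zpow_subset_dyadicBox x t j)).trans (hρ.le_double j)
  have hL : ∫⁻ y in Γj t j x, f y * V x y ^ (α / n - 1) ∂μ ≤
      ρ j ^ (α / n - 1) * ∫⁻ y in Γj t j x, f y ∂μ := by
    refine setLIntegral_mul_rpow_le hf (by rw [hα]; linarith) fun y hy => hV x y ▸ ?_
    rw [hΓj] at hy
    exact measure_mono (dyadicBox_subset_of_two_zpow_le fun i => (hy i).1)
  have hHolder : ∫⁻ y in Γj t j x, f y ∂μ ≤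
      θ t x ^ (1 / p) * N * (2 ^ (γ * n) * ρ j) ^ (1 - 1 / p) := by
    refine (setLIntegral_le_density_rpow_mul hf.aemeasurable hp hN0.ne' hNtop (hθ t x)
      (hΓ t x ▸ subset_iUnion (Γj t · x) j)).trans ?_
    gcongr
    exact (measure_mono hΓB).trans hB
  have hMax (hj : ρ j ≠ ⊤) : ∫⁻ y in Γj t j x, f y ∂μ ≤
      M x * (2 ^ (γ * n) * ρ j) ^ (1 - β / n) := by
    refine (lintegral_mono_set hΓB).trans ((setLIntegral_le_mul_rpow_of_rpow_neg_mul_le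
      (ne_top_of_le_ne_top (mul_ne_top (by simp) hj) hB) ?_).trans
      (by gcongr; rw [hβ]; linarith))
    rw [neg_sub, hM]
    exact le_iSup₂_of_le (fun i => (2 : ℝ) ^ (j + 1 - t i)) (fun i => by positivity) le_rfl
  exact cone_estimate hn hη hρ hp hpq hα hr hβ
    (hθ t x ▸ setLIntegral_rpow_div_ne_top (by linarith) hN hN0.ne' hNtop _) hNtop hL hHolder
    hMax (hτ t x)

/-- Single-scale estimate on the truncated cone `Γ_t^j(x)` for the strong fractional
integral, in terms of the cone density `θ_t`, the strong fractional maximal function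
`M_β f` and the implicitly defined balance point `τ(t,x)`. -/
theorem stmt13 (n : ℕ) (hn : 0 < n)
    (ω : (Fin n → ℝ) → ℝ≥0∞) (hω : Measurable ω)
    (μ : Measure (Fin n → ℝ)) (hμ : μ = volume.withDensity ω)
    (γ η : ℝ) (hγ : 0 < γ) (hη : 0 < η)
    (hdoub : ∀ i : Fin n, ∀ᵐ x ∂(volume : Measure (Fin n → ℝ)),
      ∀ c r : ℝ, 0 < r →
        ∫⁻ u in Set.Icc (c - 2*r) (c + 2*r), ω (Function.update x i u) ≤
          (2 : ℝ≥0∞) ^ γ * ∫⁻ u in Set.Icc (c - r) (c + r), ω (Function.update x i u))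
    (hrev : ∀ i : Fin n, ∀ᵐ x ∂(volume : Measure (Fin n → ℝ)),
      ∀ c r : ℝ, 0 < r →
        ∫⁻ u in Set.Icc (c - r) (c + r), ω (Function.update x i u) ≤
          (2 : ℝ≥0∞) ^ (-η) * ∫⁻ u in Set.Icc (c - 2*r) (c + 2*r), ω (Function.update x i u))
    (p q r α β : ℝ) (hp : 1 < p) (hpq : p < q)
    (hα : α / n = 1 / p - 1 / q) (hr : r = (p + q) / 2) (hβ : β / n = 1 / p - 1 / r)
    (f : (Fin n → ℝ) → ℝ≥0∞) (hf : Measurable f)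
    (N : ℝ≥0∞) (hN : N = (∫⁻ y, f y ^ p ∂μ) ^ (1 / p)) (hN0 : 0 < N) (hNtop : N ≠ ⊤)
    (Γj : (Fin n → ℤ) → ℤ → (Fin n → ℝ) → Set (Fin n → ℝ))
    (hΓj : ∀ t j x, Γj t j x = {y | ∀ i,
      (2:ℝ) ^ (j - t i) ≤ |x i - y i| ∧ |x i - y i| < 2 ^ (j + 1 - t i)})
    (Γ : (Fin n → ℤ) → (Fin n → ℝ) → Set (Fin n → ℝ))
    (hΓ : ∀ t x, Γ t x = ⋃ j : ℤ, Γj t j x)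
    (V : (Fin n → ℝ) → (Fin n → ℝ) → ℝ≥0∞)
    (hV : ∀ x y, V x y = μ {z | ∀ i, |x i - z i| ≤ |x i - y i|})
    (θ : (Fin n → ℤ) → (Fin n → ℝ) → ℝ≥0∞)
    (hθ : ∀ t x, θ t x = (∫⁻ y in Γ t x, f y ^ p ∂μ) / N ^ p)
    (M : (Fin n → ℝ) → ℝ≥0∞)
    (hM : ∀ x, M x = ⨆ (δ : Fin n → ℝ) (_ : ∀ i, 0 < δ i),
      μ {y | ∀ i, |x i - y i| < δ i} ^ (β / n - 1) *
        ∫⁻ y in {y | ∀ i, |x i - y i| < δ i}, f y ∂μ)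
    (τ : (Fin n → ℤ) → (Fin n → ℝ) → ℝ)
    (hτ : ∀ t x, θ t x ^ (1 / p) * N / M x =
      μ {y | ∀ i, |x i - y i| ≤ (2:ℝ) ^ (τ t x - (t i : ℝ))} ^ (1 / r)) :
    ∀ t : Fin n → ℤ, ∀ j : ℤ, ∀ᵐ x ∂μ,
      ∫⁻ y in Γj t j x, f y * V x y ^ (α / n - 1) ∂μ ≤
        (2 : ℝ≥0∞) ^ (-(η * |(j : ℝ) - τ t x| * min (α - β) (n / q))) *
          (2 : ℝ≥0∞) ^ (γ * n) *
          θ t x ^ ((1 / p) * (1 - r / q)) * M x ^ (r / q) * N ^ (1 - r / q) :=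
  stmt13_general n hn ω hω μ hμ γ η hη hdoub hrev p q r α β hp hpq hα hr hβ f hf N hN hN0 hNtop Γj
    hΓj Γ hΓ V hV θ hθ M hM τ hτ
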